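/- Let S, n₂ ≥ 1, let K₁,…,K_S ⊆ ℝ^{n₂} be nonempty cones, and for each i ∈ {1,…,S} let z_i ∈ ℝ^{n₂} and let Y_i be a symmetric n₂×n₂ real matrix such that the block matrix [[1, z_iᵀ],[z_i, Y_i]] belongs to CPP(ℝ₊ × K_i). Then there exists a symmetric (1+Sn₂)×(1+Sn₂) real matrix M ∈ CPP(ℝ₊ × K₁ × ⋯ × K_S), with index set partitioned into one block of size 1 and S blocks of size n₂, whose (0,0) entry equals 1, whose (i,0) block equals z_i and whose (i,i) diagonal block equals Y_i for every i ∈ {1,…,S}. -/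

import Mathlib

open Matrix

/-- `CPP K` is the set of matrices `M` that can be written as a finite sum
`∑ l, v l * (v l)ᵀ` with every `v l ∈ K`. -/
def CPP {d : Type*} (K : Set (d → ℝ)) : Set (Matrix d d ℝ) :=
  {M | ∃ (r : ℕ) (v : Fin r → d → ℝ), (∀ l, v l ∈ K) ∧
    M = ∑ l, Matrix.vecMulVec (v l) (v l)}

/-- The product `A × B` of sets of vectors, realized as block vectors indexed by `p ⊕ q`. -/
def SetProd {p q : Type*} (A : Set (p → ℝ)) (B : Set (q → ℝ)) : Set (p ⊕ q → ℝ) :=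
  {v | (fun i => v (Sum.inl i)) ∈ A ∧ (fun j => v (Sum.inr j)) ∈ B}

/-- A cone: a set closed under multiplication by nonnegative scalars. -/
def IsCone {d : Type*} (K : Set (d → ℝ)) : Prop :=
  ∀ c : ℝ, 0 ≤ c → ∀ x ∈ K, c • x ∈ K

/-!
Write each block matrix as `∑ₗ (tᵢₗ; wᵢₗ)(tᵢₗ; wᵢₗ)ᵀ` with `tᵢₗ ≥ 0`, `wᵢₗ ∈ Kᵢ` and
`∑ₗ tᵢₗ² = 1`. Choosing one index `Lᵢ` for every block independently, the vector with first entry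
`∏ᵢ tᵢ,Lᵢ` and `s`-th block `(∏_{i ≠ s} tᵢ,Lᵢ) w_{s,Lₛ}` lies in `ℝ₊ × K₁ × ⋯ × K_S` because the
`Kᵢ` are cones. Summing the rank-one matrices of these vectors over all tuples `L`, the factors
`∑ₗ tᵢₗ² = 1` of the blocks not involved in an entry drop out, so the `(0,0)`, `(s,0)` and
`(s,s)` entries are exactly `1`, `zₛ` and `Yₛ`.
-/

open Finset

lemma sum_vecMulVec_mem_CPP {d α : Type*} [Fintype α] {K : Set (d → ℝ)} (v : α → d → ℝ)
    (hv : ∀ x, v x ∈ K) : ∑ x, vecMulVec (v x) (v x) ∈ CPP K :=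
  ⟨Fintype.card α, v ∘ (Fintype.equivFin α).symm, fun _ => hv _,
    (Equiv.sum_comp (Fintype.equivFin α).symm _).symm⟩

lemma isSymm_of_mem_CPP {d : Type*} {K : Set (d → ℝ)} {M : Matrix d d ℝ} (hM : M ∈ CPP K) :
    M.IsSymm := by
  obtain ⟨r, v, -, rfl⟩ := hM
  simp only [IsSymm, transpose_sum, transpose_vecMulVec]

lemma apply_eq_sum_of_mem_CPP {d : Type*} {K : Set (d → ℝ)} {M : Matrix d d ℝ}
    (hM : M ∈ CPP K) : ∃ (r : ℕ) (v : Fin r → d → ℝ), (∀ l, v l ∈ K) ∧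
      ∀ a b, M a b = ∑ l, v l a * v l b := by
  obtain ⟨r, v, hv, rfl⟩ := hM
  exact ⟨r, v, hv, fun a b => by simp only [Matrix.sum_apply, vecMulVec_apply]⟩

lemma exists_decomposition_of_fromBlocks_mem_CPP {n : Type*} {K : Set (n → ℝ)} {z : n → ℝ}
    {Y : Matrix n n ℝ}
    (h : fromBlocks (of fun (_ _ : Fin 1) => (1 : ℝ)) (of fun (_ : Fin 1) j => z j)
      (of fun a (_ : Fin 1) => z a) Y ∈ CPP (SetProd {v : Fin 1 → ℝ | 0 ≤ v 0} K)) :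
    ∃ (r : ℕ) (t : Fin r → ℝ) (w : Fin r → n → ℝ), (∀ l, 0 ≤ t l) ∧ (∀ l, w l ∈ K) ∧
      ∑ l, t l * t l = 1 ∧ (∀ j, ∑ l, w l j * t l = z j) ∧
      ∀ a b, ∑ l, w l a * w l b = Y a b := by
  obtain ⟨r, v, hv, hM⟩ := apply_eq_sum_of_mem_CPP h
  refine ⟨r, fun l => v l (.inl 0), fun l j => v l (.inr j), fun l => (hv l).1,
    fun l => (hv l).2, ?_, fun j => ?_, fun a b => ?_⟩
  · simpa using (hM (.inl 0) (.inl 0)).symm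
  · simpa using (hM (.inr j) (.inl 0)).symm
  · simpa using (hM (.inr a) (.inr b)).symm

lemma Fintype.sum_pi_mul_prod_erase {R ι : Type*} [CommSemiring R] [Fintype ι] [DecidableEq ι]
    {κ : ι → Type*} [∀ i, Fintype (κ i)] (f : ∀ i, κ i → R) (hf : ∀ i, ∑ l, f i l = 1)
    (s : ι) (g : κ s → R) :
    ∑ L : ∀ i, κ i, g (L s) * ∏ i ∈ univ.erase s, f i (L i) = ∑ l, g l := by
  have hupdate_ne : ∀ i ∈ univ.erase s, Function.update f s g i = f i :=
    fun i hi => Function.update_of_ne (ne_of_mem_erase hi) _ _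
  have hupdate : ∀ L : ∀ i, κ i,
      g (L s) * ∏ i ∈ univ.erase s, f i (L i) = ∏ i, Function.update f s g i (L i) := by
    intro L
    rw [← mul_prod_erase univ _ (mem_univ s), Function.update_self]
    exact congrArg _ (Finset.prod_congr rfl fun i hi => by rw [hupdate_ne i hi])
  rw [Fintype.sum_congr _ _ hupdate, ← Fintype.prod_sum, ← mul_prod_erase univ _ (mem_univ s),
    Function.update_self, Finset.prod_eq_one fun i hi => by rw [hupdate_ne i hi, hf], mul_one]

section ProductDecomposition

variable {ι n : Type*} [Fintype ι] [DecidableEq ι] {κ : ι → Type*} [∀ i, Fintype (κ i)]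
  (t : ∀ i, κ i → ℝ) (w : ∀ i, κ i → n → ℝ)

def prodVec (L : ∀ i, κ i) : Fin 1 ⊕ ι × n → ℝ :=
  Sum.elim (fun _ => ∏ i, t i (L i))
    fun p => (∏ i ∈ univ.erase p.1, t i (L i)) * w p.1 (L p.1) p.2

def prodGram : Matrix (Fin 1 ⊕ ι × n) (Fin 1 ⊕ ι × n) ℝ :=
  ∑ L : ∀ i, κ i, vecMulVec (prodVec t w L) (prodVec t w L)

lemma prodGram_mem_CPP {K : ι → Set (n → ℝ)} (hK : ∀ i, IsCone (K i)) (ht : ∀ i l, 0 ≤ t i l)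
    (hw : ∀ i l, w i l ∈ K i) :
    prodGram t w ∈ CPP {v : Fin 1 ⊕ ι × n → ℝ |
      0 ≤ v (.inl 0) ∧ ∀ s, (fun j => v (.inr (s, j))) ∈ K s} := by
  refine sum_vecMulVec_mem_CPP _ fun L => ⟨prod_nonneg fun i _ => ht i _, fun s => ?_⟩
  have hblock : (fun j => prodVec t w L (.inr (s, j))) =
      (∏ i ∈ univ.erase s, t i (L i)) • w s (L s) := rfl
  rw [hblock]
  exact hK s _ (prod_nonneg fun i _ => ht i _) _ (hw s (L s))

variable {t}

lemma prodGram_inl_inl (ht : ∀ i, ∑ l, t i l * t i l = 1) :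
    prodGram t w (.inl 0) (.inl 0) = 1 := by
  simp only [prodGram, Matrix.sum_apply, vecMulVec_apply, prodVec, Sum.elim_inl,
    ← prod_mul_distrib]
  rw [← Fintype.prod_sum (fun i l => t i l * t i l)]
  exact Finset.prod_eq_one fun i _ => ht i

lemma prodGram_inr_inl (ht : ∀ i, ∑ l, t i l * t i l = 1) (s : ι) (j : n) :
    prodGram t w (.inr (s, j)) (.inl 0) = ∑ l, w s l j * t s l := by
  rw [prodGram, Matrix.sum_apply, ← Fintype.sum_pi_mul_prod_erase (fun i l => t i l * t i l) ht s]
  refine Finset.sum_congr rfl fun L _ => ?_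
  simp only [vecMulVec_apply, prodVec, Sum.elim_inl, Sum.elim_inr,
    ← mul_prod_erase univ (fun i => t i (L i)) (mem_univ s), prod_mul_distrib]
  ring

lemma prodGram_inr_inr (ht : ∀ i, ∑ l, t i l * t i l = 1) (s : ι) (a b : n) :
    prodGram t w (.inr (s, a)) (.inr (s, b)) = ∑ l, w s l a * w s l b := by
  rw [prodGram, Matrix.sum_apply, ← Fintype.sum_pi_mul_prod_erase (fun i l => t i l * t i l) ht s]
  refine Finset.sum_congr rfl fun L _ => ?_
  simp only [vecMulVec_apply, prodVec, Sum.elim_inr, prod_mul_distrib]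
  ring

end ProductDecomposition

theorem stmt_6_general (S n₂ : ℕ)
    (Ki : Fin S → Set (Fin n₂ → ℝ)) (hKi : ∀ i, IsCone (Ki i))
    (z : Fin S → Fin n₂ → ℝ)
    (Y : Fin S → Matrix (Fin n₂) (Fin n₂) ℝ)
    (h : ∀ i, Matrix.fromBlocks (Matrix.of fun (_ _ : Fin 1) => (1 : ℝ))
        (Matrix.of fun (_ : Fin 1) j => z i j) (Matrix.of fun a (_ : Fin 1) => z i a) (Y i)
        ∈ CPP (SetProd {v : Fin 1 → ℝ | 0 ≤ v 0} (Ki i))) :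
    ∃ M : Matrix (Fin 1 ⊕ Fin S × Fin n₂) (Fin 1 ⊕ Fin S × Fin n₂) ℝ,
      M.IsSymm ∧
      M ∈ CPP {v : Fin 1 ⊕ Fin S × Fin n₂ → ℝ |
        0 ≤ v (Sum.inl 0) ∧ ∀ s, (fun j => v (Sum.inr (s, j))) ∈ Ki s} ∧
      M (Sum.inl 0) (Sum.inl 0) = 1 ∧
      (∀ s j, M (Sum.inr (s, j)) (Sum.inl 0) = z s j) ∧
      (∀ s a b, M (Sum.inr (s, a)) (Sum.inr (s, b)) = Y s a b) := by
  choose r t w ht hw htt hz hY using fun i => exists_decomposition_of_fromBlocks_mem_CPP (h i)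
  have hM := prodGram_mem_CPP t w hKi ht hw
  refine ⟨prodGram t w, isSymm_of_mem_CPP hM, hM, prodGram_inl_inl w htt, fun s j => ?_,
    fun s a b => ?_⟩
  · rw [prodGram_inr_inl w htt, hz]
  · rw [prodGram_inr_inr w htt, hY]

theorem stmt_6 (S n₂ : ℕ) (hS : 1 ≤ S) (hn : 1 ≤ n₂)
    (Ki : Fin S → Set (Fin n₂ → ℝ)) (hKi : ∀ i, IsCone (Ki i))
    (hne : ∀ i, (Ki i).Nonempty)
    (z : Fin S → Fin n₂ → ℝ)
    (Y : Fin S → Matrix (Fin n₂) (Fin n₂) ℝ) (hY : ∀ i, (Y i).IsSymm)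
    (h : ∀ i, Matrix.fromBlocks (Matrix.of fun (_ _ : Fin 1) => (1 : ℝ))
        (Matrix.of fun (_ : Fin 1) j => z i j) (Matrix.of fun a (_ : Fin 1) => z i a) (Y i)
        ∈ CPP (SetProd {v : Fin 1 → ℝ | 0 ≤ v 0} (Ki i))) :
    ∃ M : Matrix (Fin 1 ⊕ Fin S × Fin n₂) (Fin 1 ⊕ Fin S × Fin n₂) ℝ,
      M.IsSymm ∧
      M ∈ CPP {v : Fin 1 ⊕ Fin S × Fin n₂ → ℝ |
        0 ≤ v (Sum.inl 0) ∧ ∀ s, (fun j => v (Sum.inr (s, j))) ∈ Ki s} ∧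
      M (Sum.inl 0) (Sum.inl 0) = 1 ∧
      (∀ s j, M (Sum.inr (s, j)) (Sum.inl 0) = z s j) ∧
      (∀ s a b, M (Sum.inr (s, a)) (Sum.inr (s, b)) = Y s a b) :=
  stmt_6_general S n₂ Ki hKi z Y h
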